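/- arXiv:1412.7130 — 4 statements merged into one kernel-verified Lean document; each statement's English description precedes it below -/
import Mathlib

section
/- Let G = (V,E,ω) be a finite weighted directed graph with vertex set V = {1,…,n}, weights ω(i,j) ∈ ℂ, and weighted adjacency matrix M_G = (ω(i,j))_{i,j∈V} (with ω(i,j) = 0 whenever (i,j) ∉ E). Let λ₀ ∈ ℂ be an eigenvalue of M_G with eigenvector u = (u₁,…,u_n) ∈ ℂⁿ, i.e. M_G u = λ₀ u and u ≠ 0, and assume S = {m+1,…,n} is a λ₀-structural set of G. Then the restriction u_S = (u_{m+1},…,u_n) satisfies R_S(G,λ₀) u_S = λ₀ u_S and u_S ≠ 0; in particular λ₀ is an eigenvalue of the reduced matrix R_S(G,λ₀). -/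
/-! Common definitions for isospectral graph reductions (Bunimovich–Webb). -/

section IGRDefs

variable {V : Type*} {K : Type*} [Field K]

/-- A cycle of the graph with edge relation `E`, encoded as the list of its vertices
`(i₀, …, i_p)` with `i₀ = i_p`: length at least 2 (`p ≥ 1`), consecutive pairs are edges,
first vertex equals last vertex, and all vertices are distinct except `i₀ = i_p`. -/
def IsCycleList (E : V → V → Prop) (l : List V) : Prop :=
  2 ≤ l.length ∧ l.Chain' E ∧ l.head? = l.getLast? ∧ l.dropLast.Nodup

/-- `S` is a `lam`-structural set: it is nonempty, every cycle that is not a loop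
(i.e. of list-length `> 2`) contains a vertex of `S`, and `ω i i ≠ lam` off `S`. -/
def IsStructural {α : Type*} (E : V → V → Prop) (ω : V → V → α) (lam : α) (S : Set V) :
    Prop :=
  S.Nonempty ∧ (∀ l, IsCycleList E l → 2 < l.length → ∃ v ∈ l, v ∈ S) ∧
    ∀ i, i ∉ S → ω i i ≠ lam

/-- A branch of `(G,S)` from `i` to `j`, encoded as the list of its vertices
`(i₀, i₁, …, i_p)`: a path (all vertices distinct, except that possibly `i₀ = i_p`)
of length `p ≥ 1` whose interior vertices `i₁, …, i_{p-1}` lie outside `S`. -/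
def IsBranchList (E : V → V → Prop) (S : Set V) (i j : V) (l : List V) : Prop :=
  2 ≤ l.length ∧ l.Chain' E ∧ l.head? = some i ∧ l.getLast? = some j ∧
    l.tail.Nodup ∧ l.dropLast.Nodup ∧ ∀ v ∈ l.tail.dropLast, v ∉ S

/-- The weight `ω(β,λ) = ω(i₀,i₁) ∏_{ℓ=1}^{p-1} ω(i_ℓ,i_{ℓ+1})/(λ - ω(i_ℓ,i_ℓ))`
of a branch `β = (i₀,…,i_p)`. -/
noncomputable def branchWeight (ω : V → V → K) (lam : K) : List V → K
  | [] => 0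
  | [_] => 0
  | [i, j] => ω i j
  | i :: j :: k :: t => ω i j * branchWeight ω lam (j :: k :: t) / (lam - ω j j)

/-- The entry `R_{ij}(G,S,λ) = Σ_{β ∈ B_{ij}} ω(β,λ)` of the (extended) reduced matrix. -/
noncomputable def Rentry (E : V → V → Prop) (S : Set V) (ω : V → V → K) (lam : K)
    (i j : V) : K :=
  ∑ᶠ l ∈ {l : List V | IsBranchList E S i j l}, branchWeight ω lam l

/-- `R^{(p)}_{ij}(G,S,λ)`: the sum of weights of branches of length `p` from `i` to `j`. -/
noncomputable def RentryN (E : V → V → Prop) (S : Set V) (ω : V → V → K) (lam : K)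
    (p : ℕ) (i j : V) : K :=
  ∑ᶠ l ∈ {l : List V | IsBranchList E S i j l ∧ l.length = p + 1}, branchWeight ω lam l

/-- `Sk E S k` is the set of vertices of depth `≤ k`: `S₀ = S` and
`S_{k+1} = S_k ∪ {i | every edge from i ends in S_k}`. -/
def Sk (E : V → V → Prop) (S : Set V) : ℕ → Set V
  | 0 => S
  | k + 1 => Sk E S k ∪ {i | ∀ j, E i j → j ∈ Sk E S k}

end IGRDefs

/-!
Call a path that stays off `S` until its last vertex, which lies in `S`, an exit path. As `S`
meets every cycle that is not a loop, the loop-free part of `G` off `S` is acyclic, and an exit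
path starting at a successor `k ≠ v` of a vertex `v ∉ S` never returns to `v`. By well-founded
induction along that acyclic part, the eigenvector equation
`(λ₀ - ω(v,v)) u_v = ∑_{k ≠ v} ω(v,k) u_k` at `v ∉ S` unfolds to `u_v = ∑_γ w(γ) u_{end γ}`,
summed over the exit paths `γ` from `v`, where `w(γ)` is the weight of a branch with its first
edge factor removed. A branch from `i ∈ S` is an edge `i → k` followed by an exit path from `k`,
so `(R_S u_S)_i = ∑_k ω(i,k) u_k = λ₀ u_i`; and `u_S = 0` would force `u = 0`.
-/

theorem List.finite_setOf_nodup (α : Type*) [Fintype α] : {l : List α | l.Nodup}.Finite :=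
  (List.finite_length_le α (Fintype.card α)).subset fun _ hl => hl.length_le_card

theorem wellFounded_swap_of_acyclic {α : Type*} [Fintype α] {r : α → α → Prop}
    (h : ∀ a l, (a :: l).Nodup → ¬(a :: l ++ [a]).IsChain r) : WellFounded (Function.swap r) := by
  -- Induct on the room `n` left to extend a simple `r`-path ending at `a`: an `r`-successor of `a`
  -- cannot already lie on the path, since that would close a simple cycle.
  suffices key : ∀ n (p : List α) a, Fintype.card α ≤ p.length + n → (p ++ [a]).Nodup →
      (p ++ [a]).IsChain r → Acc (Function.swap r) a from
    ⟨fun a => key (Fintype.card α) [] a (by simp) (by simp) (by simp)⟩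
  intro n
  induction n with
  | zero =>
    intro p a hcard hnd _
    have := hnd.length_le_card
    simp only [List.length_append, List.length_singleton] at this
    omega
  | succ n ih =>
    intro p a hcard hnd hch
    refine .intro a fun b hab => ?_
    have hchb : (p ++ [a] ++ [b]).IsChain r := hch.append (.singleton b) (by simpa using hab)
    have hb : b ∉ p ++ [a] := by
      intro hb
      obtain ⟨s, t, hst⟩ := List.append_of_mem hb
      rw [hst, List.append_assoc] at hchb
      exact h b t (hst ▸ hnd).of_append_right (by simpa using hchb.right_of_append)
    refine ih (p ++ [a]) b ?_ (by simpa using hnd.concat hb) hchb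
    simp only [List.length_append, List.length_singleton]
    omega

section Structural

variable {V α : Type*} {E : V → V → Prop} {S : Set V} {ω : V → V → α} {lam : α}

theorem IsStructural.exists_mem_of_cycle (hS : IsStructural E ω lam S) {a : V} {l : List V}
    (hl : l ≠ []) (hnd : (a :: l).Nodup) (hch : (a :: l ++ [a]).IsChain E) :
    ∃ x ∈ a :: l, x ∈ S := by
  have hlen : 2 < (a :: l ++ [a]).length := by
    have := List.length_pos_of_ne_nil hl
    simp only [List.length_append, List.length_cons]
    omega
  have hcyc : IsCycleList E (a :: l ++ [a]) := by
    refine ⟨by omega, hch, ?_, ?_⟩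
    · rw [List.getLast?_concat]; rfl
    · rwa [List.dropLast_concat]
  obtain ⟨x, hx, hxS⟩ := hS.2.1 _ hcyc hlen
  rcases List.mem_append.mp hx with hx | hx
  · exact ⟨x, hx, hxS⟩
  · exact ⟨a, List.mem_cons_self, List.mem_singleton.mp hx ▸ hxS⟩

theorem IsStructural.wellFounded [Fintype V] (hS : IsStructural E ω lam S) :
    WellFounded (Function.swap fun i j : V => i ∉ S ∧ j ≠ i ∧ E i j) := by
  refine wellFounded_swap_of_acyclic fun a l hnd hch => ?_
  cases l with
  | nil => exact (List.isChain_pair.mp hch).2.1 rfl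
  | cons c l =>
    have haS : a ∉ S := (List.isChain_cons_cons.mp hch).1.1
    have hoff : ∀ x ∈ a :: c :: l, x ∉ S :=
      hch.backwards_concat_induction (· ∉ S) _ (fun _ _ h _ => h.1) haS
    obtain ⟨x, hx, hxS⟩ := hS.exists_mem_of_cycle (List.cons_ne_nil c l) hnd
      (hch.imp fun _ _ h => h.2.2)
    exact hoff x hx hxS

end Structural

section ExitPaths

variable {V α : Type*} {E : V → V → Prop} {S : Set V} {ω : V → V → α} {lam : α}

def IsExitPath (E : V → V → Prop) (S : Set V) (l : List V) : Prop :=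
  l.IsChain E ∧ l.Nodup ∧ (∀ x ∈ l.dropLast, x ∉ S) ∧ ∃ j ∈ S, l.getLast? = some j

def exitPaths (E : V → V → Prop) (S : Set V) (v : V) : Set (List V) :=
  {l | IsExitPath E S l ∧ l.head? = some v}

theorem isExitPath_singleton {v : V} : IsExitPath E S [v] ↔ v ∈ S := by
  simp [IsExitPath]

theorem isExitPath_cons_cons {v k : V} {t : List V} :
    IsExitPath E S (v :: k :: t) ↔ v ∉ S ∧ E v k ∧ v ∉ k :: t ∧ IsExitPath E S (k :: t) := by
  simp only [IsExitPath, List.isChain_cons_cons, List.nodup_cons (a := v), List.dropLast_cons_cons,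
    List.forall_mem_cons, List.getLast?_cons_cons]
  tauto

theorem exitPaths_finite [Fintype V] (v : V) : (exitPaths E S v).Finite :=
  (List.finite_setOf_nodup V).subset fun _ hl => hl.1.2.1

theorem exists_eq_cons_of_mem_exitPaths {v : V} {l : List V} (hl : l ∈ exitPaths E S v) :
    ∃ t, l = v :: t :=
  ⟨l.tail, List.eq_cons_of_mem_head? hl.2⟩

theorem exitPaths_of_mem {v : V} (hv : v ∈ S) : exitPaths E S v = {[v]} := by
  refine Set.eq_singleton_iff_unique_mem.mpr ⟨⟨isExitPath_singleton.mpr hv, rfl⟩, fun l hl => ?_⟩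
  obtain ⟨t, rfl⟩ := exists_eq_cons_of_mem_exitPaths hl
  cases t with
  | nil => rfl
  | cons k t => exact absurd hv (isExitPath_cons_cons.mp hl.1).1

theorem IsStructural.notMem_of_isExitPath (hS : IsStructural E ω lam S) {v k : V} {t : List V}
    (hv : v ∉ S) (hvk : E v k) (hkv : k ≠ v) (hl : IsExitPath E S (k :: t)) : v ∉ k :: t := by
  intro hmem
  obtain ⟨s, r, hsr⟩ := List.append_of_mem hmem
  have hs : s ≠ [] := by
    rintro rfl
    exact hkv (List.cons.inj hsr).1
  obtain ⟨hch, hnd, hoff, -⟩ := hl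
  have hch' : (v :: (s ++ v :: r)).IsChain E := hsr ▸ hch.cons_cons hvk
  rw [hsr] at hnd hoff
  have hcyc : (v :: s ++ [v]).IsChain E := hch'.prefix ⟨r, by simp⟩
  obtain ⟨x, hx, hxS⟩ := hS.exists_mem_of_cycle hs
    ((List.nodup_middle.mp hnd).sublist ((List.sublist_append_left s r).cons_cons v)) hcyc
  rcases List.mem_cons.mp hx with rfl | hx
  · exact hv hxS
  · exact hoff x (by rw [List.dropLast_append_cons]; exact List.mem_append_left _ hx) hxS

theorem IsStructural.exitPaths_of_notMem (hS : IsStructural E ω lam S) {v : V} (hv : v ∉ S) :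
    exitPaths E S v = ⋃ k ∈ {k | k ≠ v ∧ E v k}, List.cons v '' exitPaths E S k := by
  ext l
  simp only [Set.mem_iUnion, Set.mem_image, Set.mem_ofPred_eq, exists_prop]
  constructor
  · intro hl
    obtain ⟨t, rfl⟩ := exists_eq_cons_of_mem_exitPaths hl
    cases t with
    | nil => exact absurd (isExitPath_singleton.mp hl.1) hv
    | cons k t =>
      obtain ⟨-, hvk, hvt, hkt⟩ := isExitPath_cons_cons.mp hl.1
      exact ⟨k, ⟨fun h => hvt (h ▸ List.mem_cons_self), hvk⟩, k :: t, ⟨hkt, rfl⟩, rfl⟩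
  · rintro ⟨k, ⟨hkv, hvk⟩, l', hl', rfl⟩
    obtain ⟨t, rfl⟩ := exists_eq_cons_of_mem_exitPaths hl'
    exact ⟨isExitPath_cons_cons.mpr ⟨hv, hvk, hS.notMem_of_isExitPath hv hvk hkv hl'.1, hl'.1⟩, rfl⟩

theorem iUnion_setOf_isBranchList {i : V} (hi : i ∈ S) :
    ⋃ j : S, {l | IsBranchList E S i j l} =
      ⋃ k ∈ {k | E i k}, List.cons i '' exitPaths E S k := by
  ext l
  simp only [Set.mem_iUnion, Set.mem_image, Set.mem_ofPred_eq, exists_prop, Subtype.exists]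
  constructor
  · rintro ⟨j, hj, hlen, hch, hh, hlast, htl, hdl, hint⟩
    obtain ⟨t, rfl⟩ : ∃ t, l = i :: t := ⟨l.tail, List.eq_cons_of_mem_head? hh⟩
    obtain ⟨k, t, rfl⟩ : ∃ k t', t = k :: t' :=
      List.exists_cons_of_ne_nil (by rintro rfl; simp at hlen)
    exact ⟨k, (List.isChain_cons_cons.mp hch).1, k :: t,
      ⟨⟨(List.isChain_cons_cons.mp hch).2, htl, hint, j, hj, hlast⟩, rfl⟩, rfl⟩
  · rintro ⟨k, hik, l', hl', rfl⟩
    obtain ⟨t, rfl⟩ := exists_eq_cons_of_mem_exitPaths hl'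
    obtain ⟨⟨hch, hnd, hoff, j, hj, hlast⟩, -⟩ := hl'
    refine ⟨j, hj, by simp, hch.cons_cons hik, rfl, hlast, hnd, ?_, hoff⟩
    rw [List.dropLast_cons_cons]
    exact List.nodup_cons.mpr ⟨fun h => hoff i h hi, hnd.sublist (List.dropLast_sublist _)⟩

theorem finsum_mem_biUnion_image_cons [Fintype V] {M : Type*} [AddCommMonoid M] (i : V)
    (T : Set V) (f : List V → M) :
    ∑ᶠ l ∈ ⋃ k ∈ T, List.cons i '' exitPaths E S k, f l =
      ∑ᶠ k ∈ T, ∑ᶠ l ∈ exitPaths E S k, f (i :: l) := by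
  rw [finsum_mem_biUnion _ T.toFinite fun k _ => (exitPaths_finite k).image _]
  · exact finsum_mem_congr rfl fun k _ => finsum_mem_image List.cons_injective.injOn
  · intro k _ k' _ hne
    refine Set.disjoint_left.mpr ?_
    rintro _ ⟨l, hl, rfl⟩ ⟨l', hl', hll'⟩
    obtain rfl := List.cons_injective hll'
    exact hne (Option.some.inj (hl.2.symm.trans hl'.2))

end ExitPaths

section Weights

variable {V K : Type*} [Field K] {E : V → V → Prop} {S : Set V} {ω : V → V → K} {lam : K}

noncomputable def pathWeight (ω : V → V → K) (lam : K) : List V → K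
  | [] => 1
  | [_] => 1
  | a :: b :: t => ω a b / (lam - ω a a) * pathWeight ω lam (b :: t)

theorem branchWeight_cons_cons (i k : V) (t : List V) :
    branchWeight ω lam (i :: k :: t) = ω i k * pathWeight ω lam (k :: t) := by
  induction t generalizing i k with
  | nil => simp [branchWeight, pathWeight]
  | cons m t ih => rw [branchWeight, ih, pathWeight]; ring

variable [Fintype V]

theorem sum_Rentry_mul [DecidablePred (· ∈ S)] {i : V} (hi : i ∈ S)
    (hω : ∀ i j, ¬E i j → ω i j = 0) (g : V → K) :
    ∑ j : S, Rentry E S ω lam i j * g j =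
      ∑ k, ω i k * ∑ᶠ l ∈ exitPaths E S k, pathWeight ω lam l * l.getLast?.elim 0 g := by
  calc ∑ j : S, Rentry E S ω lam i j * g j
      = ∑ᶠ l ∈ ⋃ j : S, {l | IsBranchList E S i j l},
          branchWeight ω lam l * l.getLast?.elim 0 g := by
        rw [finsum_mem_iUnion, finsum_eq_sum_of_fintype]
        · refine Finset.sum_congr rfl fun j _ => ?_
          rw [Rentry, finsum_mem_mul]
          exact finsum_mem_congr rfl fun l hl => by simp [hl.2.2.2.1]
        · intro j j' hne
          refine Set.disjoint_left.mpr fun l hl hl' => hne (Subtype.ext ?_)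
          exact Option.some.inj (hl.2.2.2.1.symm.trans hl'.2.2.2.1)
        · exact fun j => ((List.finite_setOf_nodup V).image (List.cons i)).subset
            fun l hl => ⟨l.tail, hl.2.2.2.2.1, (List.eq_cons_of_mem_head? hl.2.2.1).symm⟩
    _ = ∑ᶠ k ∈ {k | E i k},
          ω i k * ∑ᶠ l ∈ exitPaths E S k, pathWeight ω lam l * l.getLast?.elim 0 g := by
        rw [iUnion_setOf_isBranchList hi, finsum_mem_biUnion_image_cons]
        refine finsum_mem_congr rfl fun k _ => ?_
        rw [mul_finsum_mem]
        refine finsum_mem_congr rfl fun l hl => ?_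
        obtain ⟨t, rfl⟩ := exists_eq_cons_of_mem_exitPaths hl
        simp [branchWeight_cons_cons, mul_assoc]
    _ = _ := by
        refine finsum_mem_eq_sum_of_inter_support_eq _ (Set.ext fun k => ?_)
        simp only [Set.mem_inter_iff, Set.mem_ofPred_eq, Function.mem_support, Finset.coe_univ,
          Set.mem_univ, true_and, and_iff_right_iff_imp]
        exact fun h => by_contra fun hik => h (by rw [hω i k hik, zero_mul])

theorem IsStructural.finsum_exitPaths_eq [DecidableEq V] (hS : IsStructural E ω lam S)
    (hω : ∀ i j, ¬E i j → ω i j = 0) {u : V → K} (hu : ∀ i, ∑ j, ω i j * u j = lam * u i)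
    (v : V) : ∑ᶠ l ∈ exitPaths E S v, pathWeight ω lam l * l.getLast?.elim 0 u = u v := by
  induction v using hS.wellFounded.induction with
  | _ v ih =>
  by_cases hv : v ∈ S
  · simp [exitPaths_of_mem hv, pathWeight]
  have hd : lam - ω v v ≠ 0 := sub_ne_zero.mpr (hS.2.2 v hv).symm
  rw [hS.exitPaths_of_notMem hv, finsum_mem_biUnion_image_cons]
  calc ∑ᶠ k ∈ {k | k ≠ v ∧ E v k}, ∑ᶠ l ∈ exitPaths E S k,
        pathWeight ω lam (v :: l) * (v :: l).getLast?.elim 0 u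
      = ∑ᶠ k ∈ {k | k ≠ v ∧ E v k}, ω v k * u k / (lam - ω v v) := by
        refine finsum_mem_congr rfl fun k hk => ?_
        rw [← ih k ⟨hv, hk⟩, mul_div_right_comm, mul_finsum_mem]
        refine finsum_mem_congr rfl fun l hl => ?_
        obtain ⟨t, rfl⟩ := exists_eq_cons_of_mem_exitPaths hl
        simp [pathWeight, mul_assoc]
    _ = (∑ k ∈ Finset.univ.erase v, ω v k * u k) / (lam - ω v v) := by
        rw [Finset.sum_div]
        refine finsum_mem_eq_sum_of_inter_support_eq _ (Set.ext fun k => ?_)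
        simp only [Set.mem_inter_iff, Set.mem_ofPred_eq, Function.mem_support, Finset.coe_erase,
          Finset.coe_univ, Set.mem_sdiff, Set.mem_univ, Set.mem_singleton_iff, true_and]
        refine ⟨fun h => ⟨h.1.1, h.2⟩, fun h => ⟨⟨h.1, by_contra fun hvk => h.2 ?_⟩, h.2⟩⟩
        rw [hω v k hvk, zero_mul, zero_div]
    _ = u v := by
        rw [Finset.sum_erase_eq_sub (Finset.mem_univ v), hu]
        field_simp

end Weights

theorem reduced_matrix_eigenvector_general
    {n : ℕ} (E : Fin n → Fin n → Prop) (ω : Fin n → Fin n → ℂ)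
    (hω : ∀ i j, ¬ E i j → ω i j = 0)
    (lam0 : ℂ) (u : Fin n → ℂ)
    (hu : (Matrix.of ω).mulVec u = lam0 • u) (hu0 : u ≠ 0)
    (S : Set (Fin n)) [DecidablePred (· ∈ S)]
    (hstr : IsStructural E ω lam0 S) :
    (Matrix.of fun i j : ↥S => Rentry E S ω lam0 (i : Fin n) (j : Fin n)).mulVec
        (fun i : ↥S => u i) = lam0 • (fun i : ↥S => u i) ∧
      (fun i : ↥S => u i) ≠ 0 := by
  have hrow : ∀ i, ∑ j, ω i j * u j = lam0 * u i := fun i => by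
    simpa [Matrix.mulVec, dotProduct] using congrFun hu i
  have hexit := hstr.finsum_exitPaths_eq hω hrow
  refine ⟨funext fun i => ?_, fun huS => hu0 (funext fun v => ?_)⟩
  · simp only [Matrix.mulVec, dotProduct, Matrix.of_apply, Pi.smul_apply, smul_eq_mul]
    rw [sum_Rentry_mul i.2 hω, ← hrow]
    simp_rw [hexit]
  · rw [← hexit v, Pi.zero_apply]
    refine finsum_mem_eq_zero_of_forall_eq_zero fun l hl => ?_
    obtain ⟨-, -, -, j, hj, hlast⟩ := hl.1
    rw [hlast]
    exact mul_eq_zero_of_right _ (congrFun huS ⟨j, hj⟩)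

/-- Theorem 1 of the paper. If `M_G u = λ₀ u` with `u ≠ 0` and
`S = {m+1,…,n}` is a `λ₀`-structural set, then `R_S(G,λ₀) u_S = λ₀ u_S` and `u_S ≠ 0`;
in particular `λ₀` is an eigenvalue of the reduced matrix. -/
theorem reduced_matrix_eigenvector
    {n m : ℕ} (E : Fin n → Fin n → Prop) (ω : Fin n → Fin n → ℂ)
    (hω : ∀ i j, ¬ E i j → ω i j = 0)
    (lam0 : ℂ) (u : Fin n → ℂ)
    (hu : (Matrix.of ω).mulVec u = lam0 • u) (hu0 : u ≠ 0)
    (S : Set (Fin n)) [DecidablePred (· ∈ S)] (hS : S = {i : Fin n | m ≤ (i : ℕ)})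
    (hstr : IsStructural E ω lam0 S) :
    (Matrix.of fun i j : ↥S => Rentry E S ω lam0 (i : Fin n) (j : Fin n)).mulVec
        (fun i : ↥S => u i) = lam0 • (fun i : ↥S => u i) ∧
      (fun i : ↥S => u i) ≠ 0 :=
  reduced_matrix_eigenvector_general E ω hω lam0 u hu hu0 S hstr
end

section
/- Let G = (V,E,ω) be a finite weighted directed graph whose weighted adjacency matrix M_G = (p_{ij})_{i,j∈V} is row-stochastic (all p_{ij} ≥ 0 and Σ_j p_{ij} = 1 for every i), let S ⊂ V be a 1-structural set of G with p_{ii} = 0 for all i ∈ V∖S, and let q = (q_i)_{i∈V} be a stationary distribution of M_G, i.e. q_i ≥ 0, Σ_{i∈V} q_i = 1 and Σ_{i∈V} q_i p_{ij} = q_j for all j. Then Σ_{k∈S} q_k > 0, and the vector q_S = (q_j / Σ_{k∈S} q_k)_{j∈S} is a stationary distribution of the reduced matrix R_S(G) = R_S(G,1), i.e. Σ_{i∈S} (q_S)_i · R_{ij}(G,S,1) = (q_S)_j for all j ∈ S. -/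
/-!
Let `P = (ω i j)`, let `M` be `P` with the rows indexed by `S` replaced by zero, and let `q'` be
`q` with the entries off `S` replaced by zero. Stationarity `q P = q` says `q (1 - M) = q' P`.
Since `S` meets every cycle and there are no loops off `S`, a walk through `V ∖ S` of nonzero
weight is a path, so `M` is nilpotent and `q = q' P ∑ₙ Mⁿ`. Expanding `(P Mⁿ) i j` as a sum
over walks, the terms of nonzero weight with `i, j ∈ S` are exactly the branches with `n + 1`
edges, so `P ∑ₙ Mⁿ` agrees with `R_S(G)` on `S × S`, which gives `q_j = ∑_{i ∈ S} q_i R_{ij}`.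
Finally `q' = 0` would force `q = 0`.
-/

open Finset Matrix

section Walks

variable {V R : Type*}

def walkWeight [Semiring R] (A : Matrix V V R) : List V → R
  | [] => 1
  | [_] => 1
  | a :: b :: t => A a b * walkWeight A (b :: t)

@[simp]
theorem walkWeight_cons_cons [Semiring R] (A : Matrix V V R) (a b : V) (t : List V) :
    walkWeight A (a :: b :: t) = A a b * walkWeight A (b :: t) := rfl

theorem isChain_of_walkWeight_ne_zero [Semiring R] (A : Matrix V V R) :
    ∀ {l : List V}, walkWeight A l ≠ 0 → l.IsChain fun a b => A a b ≠ 0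
  | [], _ => List.isChain_nil
  | [a], _ => List.isChain_singleton a
  | a :: b :: t, h => by
    rw [walkWeight_cons_cons] at h
    exact List.isChain_cons_cons.2
      ⟨left_ne_zero_of_mul h, isChain_of_walkWeight_ne_zero A (right_ne_zero_of_mul h)⟩

variable [Fintype V] [DecidableEq V]

noncomputable def walks (n : ℕ) (i j : V) : Finset (List V) :=
  (List.finite_length_eq V (n + 1)).toFinset.filter
    fun l => l.head? = some i ∧ l.getLast? = some j

theorem mem_walks {n : ℕ} {i j : V} {l : List V} :
    l ∈ walks n i j ↔ l.length = n + 1 ∧ l.head? = some i ∧ l.getLast? = some j := by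
  simp [walks]

theorem walks_zero (i j : V) : walks 0 i j = if i = j then {[i]} else ∅ := by
  ext l
  simp only [mem_walks, zero_add, List.length_eq_one_iff]
  split_ifs with h <;> aesop

theorem sum_walks_succ {M : Type*} [AddCommMonoid M] (f : List V → M) (n : ℕ) (i j : V) :
    ∑ l ∈ walks (n + 1) i j, f l = ∑ u, ∑ l ∈ walks n u j, f (i :: l) := by
  rw [Finset.sum_sigma' univ (fun u => walks n u j) (fun _ l => f (i :: l))]
  refine Finset.sum_bij' (fun l _ => ⟨l.tail.headD i, l.tail⟩) (fun x _ => i :: x.2)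
    ?_ ?_ ?_ ?_ ?_
  · intro l hl
    obtain ⟨hlen, hhead, hlast⟩ := mem_walks.1 hl
    obtain ⟨t, rfl⟩ := List.head?_eq_some_iff.1 hhead
    obtain ⟨u, s, rfl⟩ : ∃ u s, t = u :: s :=
      List.exists_cons_of_ne_nil (by rintro rfl; simp at hlen)
    simp_all [mem_walks]
  · rintro ⟨u, l⟩ hl
    simp only [Finset.mem_sigma, Finset.mem_univ, true_and, mem_walks] at hl
    obtain ⟨hlen, hhead, hlast⟩ := hl
    obtain ⟨t, rfl⟩ := List.head?_eq_some_iff.1 hhead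
    simp_all [mem_walks]
  · intro l hl
    obtain ⟨t, rfl⟩ := List.head?_eq_some_iff.1 (mem_walks.1 hl).2.1
    rfl
  · rintro ⟨u, l⟩ hl
    simp only [Finset.mem_sigma, Finset.mem_univ, true_and, mem_walks] at hl
    obtain ⟨t, rfl⟩ := List.head?_eq_some_iff.1 hl.2.1
    rfl
  · intro l hl
    obtain ⟨t, rfl⟩ := List.head?_eq_some_iff.1 (mem_walks.1 hl).2.1
    rfl

theorem pow_apply_eq_sum_walks [Semiring R] (A : Matrix V V R) (n : ℕ) (i j : V) :
    (A ^ n) i j = ∑ l ∈ walks n i j, walkWeight A l := by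
  induction n generalizing i with
  | zero =>
    rw [pow_zero, one_apply, walks_zero]
    split_ifs <;> simp [walkWeight]
  | succ n ih =>
    rw [pow_succ', mul_apply, sum_walks_succ]
    refine Finset.sum_congr rfl fun u _ => ?_
    rw [ih, Finset.mul_sum]
    refine Finset.sum_congr rfl fun l hl => ?_
    obtain ⟨t, rfl⟩ := List.head?_eq_some_iff.1 (mem_walks.1 hl).2.1
    rfl

end Walks

section Taboo

variable {V R : Type*} [Semiring R]

/-- The taboo matrix: `(taboo S A ^ n) i j` sums the weights of the walks from `i` to `j` whose
vertices before the last one avoid `S`. -/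
noncomputable def taboo (S : Set V) (A : Matrix V V R) : Matrix V V R :=
  Matrix.of fun i j => Sᶜ.indicator (A · j) i

theorem taboo_apply_of_mem {S : Set V} {A : Matrix V V R} {i : V} (hi : i ∈ S) (j : V) :
    taboo S A i j = 0 := by
  simp [taboo, hi]

theorem taboo_apply_of_notMem {S : Set V} {A : Matrix V V R} {i : V} (hi : i ∉ S) (j : V) :
    taboo S A i j = A i j := by
  simp [taboo, hi]

theorem walkWeight_taboo {S : Set V} (A : Matrix V V R) :
    ∀ {l : List V}, (∀ v ∈ l.dropLast, v ∉ S) → walkWeight (taboo S A) l = walkWeight A l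
  | [], _ => rfl
  | [_], _ => rfl
  | a :: b :: t, h => by
    simp only [List.dropLast_cons_cons, List.mem_cons, forall_eq_or_imp] at h
    rw [walkWeight_cons_cons, walkWeight_cons_cons, taboo_apply_of_notMem h.1,
      walkWeight_taboo A h.2]

theorem notMem_of_walkWeight_taboo_ne_zero {S : Set V} (A : Matrix V V R) :
    ∀ {l : List V}, walkWeight (taboo S A) l ≠ 0 → ∀ v ∈ l.dropLast, v ∉ S
  | [], _ => by simp
  | [_], _ => by simp
  | a :: b :: t, h => by
    rw [walkWeight_cons_cons] at h
    simp only [List.dropLast_cons_cons, List.mem_cons, forall_eq_or_imp]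
    exact ⟨fun ha => left_ne_zero_of_mul h (taboo_apply_of_mem ha b),
      notMem_of_walkWeight_taboo_ne_zero A (right_ne_zero_of_mul h)⟩

end Taboo

section Acyclic

variable {V : Type*} {E : V → V → Prop} {S : Set V}

/-- A duplicate in `l` yields a closed sub-walk `a :: s ++ [a]`; it is a loop if `s = []` and a
cycle avoiding `S` otherwise. -/
theorem nodup_of_isChain {R : V → V → Prop}
    (hcyc : ∀ l, IsCycleList E l → 2 < l.length → ∃ v ∈ l, v ∈ S)
    (hRE : ∀ a b, R a b → E a b) (hloop : ∀ a, a ∉ S → ¬ R a a) :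
    ∀ {l : List V}, l.IsChain R → (∀ v ∈ l, v ∉ S) → l.Nodup
  | [], _, _ => List.nodup_nil
  | a :: t, hc, hS => by
    have ht : t.Nodup := nodup_of_isChain hcyc hRE hloop hc.tail fun v hv => hS v (by simp [hv])
    refine List.nodup_cons.2 ⟨fun ha => ?_, ht⟩
    obtain ⟨s, w, rfl⟩ := List.append_of_mem ha
    have hsa : a ∉ s := fun h => (List.nodup_append.1 ht).2.2 a h a (by simp) rfl
    have hchain : ((a :: s) ++ [a]).IsChain R := hc.prefix ⟨w, by simp⟩
    cases s with
    | nil => exact hloop a (hS a (by simp)) (by simpa using hchain)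
    | cons b s =>
      have hcycle : IsCycleList E ((a :: b :: s) ++ [a]) := by
        refine ⟨by simp, hchain.imp hRE, (List.getLast?_concat ..).symm, ?_⟩
        rw [List.dropLast_concat]
        exact List.nodup_cons.2 ⟨hsa, (List.nodup_append.1 ht).1⟩
      obtain ⟨v, hv, hvS⟩ := hcyc _ hcycle (by simp)
      exact hS v (by simp at hv ⊢; tauto) hvS

end Acyclic

theorem eq_indicator_vecMul_of_vecMul_eq {V R : Type*} [Fintype V] [DecidableEq V] [Ring R]
    {P : Matrix V V R} {q : V → R} (S : Set V) (hq : q ᵥ* P = q) {N : ℕ} (hN : taboo S P ^ N = 0) :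
    q = S.indicator q ᵥ* (P * ∑ n ∈ range N, taboo S P ^ n) := by
  have hsplit : q ᵥ* (1 - taboo S P) = S.indicator q ᵥ* P := by
    rw [Matrix.vecMul_sub, vecMul_one]
    nth_rw 1 [← hq]
    ext j
    simp only [Pi.sub_apply, vecMul, dotProduct, ← Finset.sum_sub_distrib]
    refine Finset.sum_congr rfl fun i _ => ?_
    by_cases hi : i ∈ S
    · simp [taboo_apply_of_mem hi, hi]
    · simp [taboo_apply_of_notMem hi, hi]
  calc q = q ᵥ* (1 - taboo S P ^ N) := by rw [hN, sub_zero, vecMul_one]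
    _ = S.indicator q ᵥ* (P * ∑ n ∈ range N, taboo S P ^ n) := by
      rw [← mul_neg_geom_sum, ← vecMul_vecMul, hsplit, vecMul_vecMul]

section Branches

variable {V K : Type*} [Field K] {E : V → V → Prop} {S : Set V}

theorem branchWeight_one_eq_walkWeight (ω : V → V → K) :
    ∀ {l : List V}, 2 ≤ l.length → (∀ v ∈ l.tail.dropLast, ω v v = 0) →
      branchWeight ω 1 l = walkWeight (of ω) l
  | [i, j], _, _ => (mul_one (ω i j)).symm
  | i :: j :: k :: t, _, h => by
    simp only [List.tail_cons, List.dropLast_cons_cons, List.mem_cons, forall_eq_or_imp] at h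
    rw [branchWeight, h.1, sub_zero, div_one, walkWeight_cons_cons,
      branchWeight_one_eq_walkWeight ω (by simp) (by simpa using h.2), of_apply]

theorem rentry_eq_sum_rentryN [Fintype V] (ω : V → V → K) (lam : K) {N : ℕ}
    (hN : Fintype.card V ≤ N) (i j : V) :
    Rentry E S ω lam i j = ∑ n ∈ range N, RentryN E S ω lam (n + 1) i j := by
  have hunion : {l | IsBranchList E S i j l} =
      ⋃ n ∈ (range N : Set ℕ), {l | IsBranchList E S i j l ∧ l.length = n + 1 + 1} := by
    ext l
    simp only [Set.mem_ofPred_eq, Set.mem_iUnion, coe_range, Set.mem_Iio, exists_prop]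
    refine ⟨fun hl => ⟨l.length - 2, ?_, hl, ?_⟩, fun ⟨_, _, hl, _⟩ => hl⟩ <;>
      obtain ⟨hlen, -, -, -, -, hnd, -⟩ := hl
    · have := hnd.length_le_card
      rw [List.length_dropLast] at this
      omega
    · omega
  rw [Rentry, hunion, finsum_mem_biUnion, finsum_mem_coe_finset]
  · rfl
  · intro n _ m _ hnm
    exact Set.disjoint_left.2 fun l hn hm => hnm (by have := hn.2; have := hm.2; omega)
  · exact (range N).finite_toSet
  · exact fun n _ => (List.finite_length_eq V _).subset fun l hl => hl.2

end Branches

section StructuralSet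

variable {V K : Type*} [Field K] {E : V → V → Prop} {S : Set V} {ω : V → V → K}

theorem dropLast_nodup_of_walkWeight_ne_zero (hω : ∀ i j, ¬ E i j → ω i j = 0)
    (hcyc : ∀ l, IsCycleList E l → 2 < l.length → ∃ v ∈ l, v ∈ S)
    (hdiag : ∀ i, i ∉ S → ω i i = 0) {l : List V} (hl : walkWeight (of ω) l ≠ 0)
    (hS : ∀ v ∈ l.dropLast, v ∉ S) : l.dropLast.Nodup :=
  nodup_of_isChain hcyc (fun a b hab => not_not.1 (mt (hω a b) hab))
    (fun a ha haa => haa (hdiag a ha))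
    ((isChain_of_walkWeight_ne_zero _ hl).prefix (List.dropLast_prefix l)) hS

theorem taboo_pow_eq_zero [Fintype V] [DecidableEq V] (hω : ∀ i j, ¬ E i j → ω i j = 0)
    (hcyc : ∀ l, IsCycleList E l → 2 < l.length → ∃ v ∈ l, v ∈ S)
    (hdiag : ∀ i, i ∉ S → ω i i = 0) : taboo S (of ω) ^ (Fintype.card V + 1) = 0 := by
  ext i j
  rw [pow_apply_eq_sum_walks, Matrix.zero_apply]
  refine Finset.sum_eq_zero fun l hl => ?_
  by_contra h
  have hS := notMem_of_walkWeight_taboo_ne_zero _ h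
  rw [walkWeight_taboo _ hS] at h
  have := (dropLast_nodup_of_walkWeight_ne_zero hω hcyc hdiag h hS).length_le_card
  rw [List.length_dropLast, (mem_walks.1 hl).1] at this
  omega

theorem isBranchList_of_walkWeight_ne_zero (hω : ∀ i j, ¬ E i j → ω i j = 0)
    (hcyc : ∀ l, IsCycleList E l → 2 < l.length → ∃ v ∈ l, v ∈ S)
    (hdiag : ∀ i, i ∉ S → ω i i = 0) {i j : V} (hi : i ∈ S) (hj : j ∈ S) {t : List V}
    (ht : t.getLast? = some j) (hS : ∀ v ∈ t.dropLast, v ∉ S)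
    (hw : walkWeight (of ω) (i :: t) ≠ 0) : IsBranchList E S i j (i :: t) := by
  have htne : t ≠ [] := by rintro rfl; simp at ht
  have hchain := isChain_of_walkWeight_ne_zero _ hw
  have hnd : t.dropLast.Nodup := by
    obtain ⟨u, s, rfl⟩ := List.exists_cons_of_ne_nil htne
    rw [walkWeight_cons_cons] at hw
    exact dropLast_nodup_of_walkWeight_ne_zero hω hcyc hdiag (right_ne_zero_of_mul hw) hS
  refine ⟨by simp [Nat.one_le_iff_ne_zero, htne],
    hchain.imp fun a b hab => not_not.1 (mt (hω a b) hab), rfl,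
    by rwa [List.getLast?_cons_of_ne_nil htne], ?_, ?_, hS⟩
  · rw [List.tail_cons, ← List.dropLast_append_getLast? j ht, List.nodup_append]
    exact ⟨hnd, List.nodup_singleton j, fun a ha b hb => by
      rw [List.mem_singleton.1 hb]; exact fun h => hS a ha (h ▸ hj)⟩
  · rw [List.dropLast_cons_of_ne_nil htne]
    exact List.nodup_cons.2 ⟨fun h => hS i h hi, hnd⟩

theorem rentryN_succ_eq_mul_taboo_pow [Fintype V] [DecidableEq V]
    (hω : ∀ i j, ¬ E i j → ω i j = 0)
    (hcyc : ∀ l, IsCycleList E l → 2 < l.length → ∃ v ∈ l, v ∈ S)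
    (hdiag : ∀ i, i ∉ S → ω i i = 0) {i j : V} (hi : i ∈ S) (hj : j ∈ S) (n : ℕ) :
    RentryN E S ω 1 (n + 1) i j = (of ω * taboo S (of ω) ^ n) i j := by
  classical
  set g : List V → K := fun l =>
    if ∀ v ∈ l.tail.dropLast, v ∉ S then walkWeight (of ω) l else 0
  have hmul : (of ω * taboo S (of ω) ^ n) i j = ∑ l ∈ walks (n + 1) i j, g l := by
    rw [mul_apply, sum_walks_succ]
    refine Finset.sum_congr rfl fun u _ => ?_
    rw [pow_apply_eq_sum_walks, Finset.mul_sum]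
    refine Finset.sum_congr rfl fun l hl => ?_
    obtain ⟨t, rfl⟩ := List.head?_eq_some_iff.1 (mem_walks.1 hl).2.1
    by_cases hS : ∀ v ∈ (u :: t).dropLast, v ∉ S
    · rw [walkWeight_taboo _ hS]
      exact (if_pos hS).symm
    · have h0 : walkWeight (taboo S (of ω)) (u :: t) = 0 :=
        not_not.1 (mt (notMem_of_walkWeight_taboo_ne_zero _) hS)
      rw [h0, mul_zero]
      exact (if_neg hS).symm
  have hbranch : ∀ l ∈ {l | IsBranchList E S i j l ∧ l.length = n + 1 + 1},
      branchWeight ω 1 l = g l := by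
    rintro l ⟨⟨hlen, -, -, -, -, -, hS⟩, -⟩
    rw [branchWeight_one_eq_walkWeight ω hlen fun v hv => hdiag v (hS v hv)]
    exact (if_pos hS).symm
  rw [hmul, RentryN, finsum_mem_congr rfl hbranch]
  refine finsum_mem_eq_sum_of_inter_support_eq g (Set.ext fun l => ?_)
  simp only [Set.mem_inter_iff, Set.mem_ofPred_eq, Function.mem_support, Finset.mem_coe,
    mem_walks]
  constructor
  · rintro ⟨⟨⟨-, -, hhead, hlast, -⟩, hlen⟩, hgl⟩
    exact ⟨⟨hlen, hhead, hlast⟩, hgl⟩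
  · rintro ⟨⟨hlen, hhead, hlast⟩, hgl⟩
    obtain ⟨t, rfl⟩ := List.head?_eq_some_iff.1 hhead
    have htne : t ≠ [] := by rintro rfl; simp at hlen
    have hS : ∀ v ∈ t.dropLast, v ∉ S := by_contra fun h => hgl (if_neg h)
    have hw : walkWeight (of ω) (i :: t) ≠ 0 := by
      rwa [show g (i :: t) = _ from if_pos hS] at hgl
    rw [List.getLast?_cons_of_ne_nil htne] at hlast
    exact ⟨⟨isBranchList_of_walkWeight_ne_zero hω hcyc hdiag hi hj hlast hS hw, hlen⟩, hgl⟩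

theorem rentry_eq_mul_sum_taboo_pow [Fintype V] [DecidableEq V]
    (hω : ∀ i j, ¬ E i j → ω i j = 0)
    (hcyc : ∀ l, IsCycleList E l → 2 < l.length → ∃ v ∈ l, v ∈ S)
    (hdiag : ∀ i, i ∉ S → ω i i = 0) {N : ℕ} (hN : Fintype.card V ≤ N) {i j : V} (hi : i ∈ S)
    (hj : j ∈ S) :
    Rentry E S ω 1 i j = (of ω * ∑ n ∈ range N, taboo S (of ω) ^ n) i j := by
  rw [rentry_eq_sum_rentryN ω 1 hN, Matrix.mul_sum, Matrix.sum_apply]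
  exact Finset.sum_congr rfl fun n _ => rentryN_succ_eq_mul_taboo_pow hω hcyc hdiag hi hj n

end StructuralSet

theorem stationary_distribution_of_reduced_general
    {V : Type*} [Fintype V]
    (E : V → V → Prop) (ω : V → V → ℝ)
    (hω : ∀ i j, ¬ E i j → ω i j = 0)
    (S : Set V) (hstr : IsStructural E ω 1 S)
    (hdiag : ∀ i, i ∉ S → ω i i = 0)
    (q : V → ℝ) (hq0 : ∀ i, 0 ≤ q i) (hq1 : ∑ i, q i = 1)
    (hqstat : ∀ j, ∑ i, q i * ω i j = q j) :
    0 < (∑ᶠ k ∈ S, q k) ∧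
      ∀ j ∈ S, (∑ᶠ i ∈ S, (q i / ∑ᶠ k ∈ S, q k) * Rentry E S ω 1 i j) =
        q j / ∑ᶠ k ∈ S, q k := by
  classical
  set X := of ω * ∑ n ∈ range (Fintype.card V + 1), taboo S (of ω) ^ n
  have hq : q = S.indicator q ᵥ* X :=
    eq_indicator_vecMul_of_vecMul_eq S (funext hqstat) (taboo_pow_eq_zero hω hstr.2.1 hdiag)
  have hR : ∀ i ∈ S, ∀ j ∈ S, Rentry E S ω 1 i j = X i j := fun i hi j hj =>
    rentry_eq_mul_sum_taboo_pow hω hstr.2.1 hdiag (Nat.le_succ _) hi hj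
  have hfinsum : ∀ f : V → ℝ, ∑ᶠ k ∈ S, f k = ∑ k, S.indicator f k := fun f => by
    rw [finsum_mem_def, finsum_eq_sum_of_fintype]
  have hpos : 0 < ∑ᶠ k ∈ S, q k := by
    have hind : 0 ≤ S.indicator q := Set.indicator_nonneg fun k _ => hq0 k
    rw [hfinsum]
    refine (Finset.sum_nonneg fun k _ => hind k).lt_of_ne fun h => ?_
    have hzero : S.indicator q = 0 :=
      funext fun k => (Finset.sum_eq_zero_iff_of_nonneg fun k _ => hind k).1 h.symm k (mem_univ k)
    rw [hzero, zero_vecMul] at hq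
    simp [hq] at hq1
  refine ⟨hpos, fun j hj => ?_⟩
  calc ∑ᶠ i ∈ S, (q i / ∑ᶠ k ∈ S, q k) * Rentry E S ω 1 i j
      = (∑ᶠ i ∈ S, q i * X i j) / ∑ᶠ k ∈ S, q k := by
        rw [div_eq_mul_inv, finsum_mem_mul]
        exact finsum_mem_congr rfl fun i hi => by rw [hR i hi j hj]; ring
    _ = q j / ∑ᶠ k ∈ S, q k := by
      rw [hfinsum (fun i => q i * X i j)]
      simp_rw [Set.indicator_mul_left]
      rw [congrFun hq j]
      rfl

/-- Proposition 3 of the paper. If `M_G` is row-stochastic, `S` is a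
`1`-structural set with zero diagonal weights off `S`, and `q` is a stationary
distribution of `M_G`, then `Σ_{k∈S} q_k > 0` and `q_S = (q_j / Σ_{k∈S} q_k)_{j∈S}` is a
stationary distribution of the reduced matrix `R_S(G) = R_S(G,1)`. -/
theorem stationary_distribution_of_reduced
    {V : Type*} [Fintype V]
    (E : V → V → Prop) (ω : V → V → ℝ)
    (hω : ∀ i j, ¬ E i j → ω i j = 0)
    (hnonneg : ∀ i j, 0 ≤ ω i j)
    (hrow : ∀ i, ∑ j, ω i j = 1)
    (S : Set V) (hstr : IsStructural E ω 1 S)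
    (hdiag : ∀ i, i ∉ S → ω i i = 0)
    (q : V → ℝ) (hq0 : ∀ i, 0 ≤ q i) (hq1 : ∑ i, q i = 1)
    (hqstat : ∀ j, ∑ i, q i * ω i j = q j) :
    0 < (∑ᶠ k ∈ S, q k) ∧
      ∀ j ∈ S, (∑ᶠ i ∈ S, (q i / ∑ᶠ k ∈ S, q k) * Rentry E S ω 1 i j) =
        q j / ∑ᶠ k ∈ S, q k :=
  stationary_distribution_of_reduced_general E ω hω S hstr hdiag q hq0 hq1 hqstat
end

section
/- Let G = (V,E,ω) be a finite weighted directed graph whose weighted adjacency matrix M_G = (p_{ij})_{i,j∈V} is row-stochastic (all p_{ij} ≥ 0 and Σ_j p_{ij} = 1 for every i), and let S ⊂ V be a 1-structural set of G with p_{ii} = 0 for all i ∈ V∖S. Then the reduced matrix R_S(G) = R_S(G,1) is row-stochastic: all its entries R_{ij}(G,S,1) are nonnegative and Σ_{j∈S} R_{ij}(G,S,1) = 1 for every i ∈ S. -/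
/-! With `ω` vanishing on the diagonal off `S`, the relation "`i → k` with `ω i k ≠ 0` and
`k ∉ S`" has no cycles, because every non-loop cycle meets the structural set `S`. Hence the
branches of nonzero weight from `i` to `j ∈ S` are exactly the walks `i → k → ⋯ → j` along edges
of nonzero weight whose interior avoids `S`, and splitting off the first edge gives
`R_ij = ω_ij + Σ_{k ∉ S} ω_ik R_kj`. The row sums `h_i = Σ_{j ∈ S} R_ij` therefore satisfy
`h_i = Σ_{j ∈ S} ω_ij + Σ_{k ∉ S} ω_ik h_k`, and well-founded induction along the acyclic
relation turns the row sums of `M_G` into `h ≡ 1`. Nonnegativity is clear, since a branch weight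
is then a product of edge weights. -/

open Relation List

namespace List

theorem exists_eq_append_cons_append_cons_of_not_nodup {α : Type*} :
    ∀ {l : List α}, ¬ l.Nodup → ∃ a l₁ l₂ l₃, l = l₁ ++ a :: l₂ ++ a :: l₃
  | [], h => absurd nodup_nil h
  | x :: xs, h => by
    rw [nodup_cons, not_and_or, not_not] at h
    rcases h with hx | hxs
    · obtain ⟨s, t, rfl⟩ := append_of_mem hx
      exact ⟨x, [], s, t, by simp⟩
    · obtain ⟨a, l₁, l₂, l₃, rfl⟩ := exists_eq_append_cons_append_cons_of_not_nodup hxs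
      exact ⟨a, x :: l₁, l₂, l₃, by simp⟩

theorem IsChain.forall_mem_tail {α : Type*} {R : α → α → Prop} {p : α → Prop}
    (hp : ∀ ⦃a b⦄, R a b → p b) : ∀ {l : List α}, IsChain R l → ∀ v ∈ l.tail, p v
  | _, .nil => by simp
  | _, .singleton _ => by simp
  | _, .cons_cons hr h => by
    rintro v (_ | ⟨_, hv⟩)
    · exact hp hr
    · exact h.forall_mem_tail hp v hv

end List

section ReducedMatrix

variable {V K : Type*}

def StepOff [Zero K] (ω : V → V → K) (S : Set V) (i k : V) : Prop :=
  ω i k ≠ 0 ∧ k ∉ S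

/-- Branches along edges of nonzero weight, without the distinctness conditions of
`IsBranchList`: for `j ∈ S` and acyclic `StepOff ω S` these are exactly the branches of nonzero
weight, and they unfold along their first edge. -/
inductive IsSupportBranch [Zero K] (ω : V → V → K) (S : Set V) : V → V → List V → Prop
  | edge {i j : V} : ω i j ≠ 0 → IsSupportBranch ω S i j [i, j]
  | cons {i k j : V} {l : List V} : StepOff ω S i k → IsSupportBranch ω S k j l →
      IsSupportBranch ω S i j (i :: l)

section Acyclic

variable [Zero K] {E : V → V → Prop} {ω : V → V → K} {S : Set V}

theorem not_isChain_stepOff_of_head?_eq_getLast? (hω : ∀ i j, ¬ E i j → ω i j = 0)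
    (hcyc : ∀ l, IsCycleList E l → 2 < l.length → ∃ v ∈ l, v ∈ S)
    (hdiag : ∀ i, i ∉ S → ω i i = 0) {l : List V} (hl : IsChain (StepOff ω S) l)
    (h2 : 2 ≤ l.length) (hclosed : l.head? = l.getLast?) : False := by
  induction hn : l.length using Nat.strongRecOn generalizing l with
  | _ n ih =>
  have hoff : ∀ v ∈ l, v ∉ S := by
    obtain ⟨a, t, rfl⟩ := exists_cons_of_length_pos (by omega : 0 < l.length)
    have htail := hl.forall_mem_tail (p := (· ∉ S)) fun _ _ h => h.2
    have ht : t ≠ [] := by rintro rfl; simp at h2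
    have ha : a = t.getLast ht := by
      rw [head?_cons, getLast?_eq_some_getLast (cons_ne_nil _ _), getLast_cons ht] at hclosed
      exact Option.some.inj hclosed
    rintro v (_ | ⟨_, hv⟩)
    · exact ha ▸ htail _ (getLast_mem ht)
    · exact htail v hv
  by_cases hnd : l.dropLast.Nodup
  · have hE : IsChain E l := hl.imp fun a b h => by_contra fun hab => h.1 (hω a b hab)
    rcases h2.lt_or_eq with h3 | h2
    · obtain ⟨v, hv, hvS⟩ := hcyc l ⟨by omega, hE, hclosed, hnd⟩ h3
      exact hoff v hv hvS
    · obtain ⟨a, b, rfl⟩ := length_eq_two.mp h2.symm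
      obtain rfl : a = b := by simpa using hclosed
      exact (isChain_pair.mp hl).1 (hdiag a (hoff a (by simp)))
  · obtain ⟨a, l₁, l₂, l₃, hsplit⟩ := exists_eq_append_cons_append_cons_of_not_nodup hnd
    have hne : l ≠ [] := by rintro rfl; simp at h2
    have hinfix : a :: l₂ ++ [a] <:+: l := by
      refine ⟨l₁, l₃ ++ [l.getLast hne], ?_⟩
      calc _ = l₁ ++ a :: l₂ ++ a :: l₃ ++ [l.getLast hne] := by simp
        _ = l := hsplit ▸ dropLast_append_getLast hne
    have hlen : l.length = l₁.length + l₂.length + l₃.length + 3 := by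
      have := congrArg List.length hsplit
      simp only [length_dropLast, length_append, length_cons] at this
      omega
    exact ih _ (by simp; omega) (hl.infix hinfix) (by simp) (by rw [getLast?_concat]; rfl) rfl

theorem not_transGen_stepOff_self (hω : ∀ i j, ¬ E i j → ω i j = 0)
    (hcyc : ∀ l, IsCycleList E l → 2 < l.length → ∃ v ∈ l, v ∈ S)
    (hdiag : ∀ i, i ∉ S → ω i i = 0) (a : V) : ¬ TransGen (StepOff ω S) a a := by
  intro h
  obtain ⟨b, hab, hba⟩ := TransGen.head'_iff.mp h
  obtain ⟨l, hl, hlast⟩ := exists_isChain_cons_of_relationReflTransGen hba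
  refine not_isChain_stepOff_of_head?_eq_getLast? hω hcyc hdiag (hl.cons_cons hab) (by simp) ?_
  rw [getLast?_cons_cons, getLast?_eq_some_getLast (cons_ne_nil _ _), hlast, head?_cons]

end Acyclic

namespace IsSupportBranch

variable [Zero K] {E : V → V → Prop} {ω : V → V → K} {S : Set V} {i j : V} {l : List V}

theorem exists_eq_cons_cons (h : IsSupportBranch ω S i j l) : ∃ x m, l = i :: x :: m := by
  induction h with
  | edge _ => exact ⟨_, _, rfl⟩
  | cons _ _ ih =>
    obtain ⟨x, m, rfl⟩ := ih
    exact ⟨_, _, rfl⟩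

theorem reflTransGen_of_mem_dropLast (h : IsSupportBranch ω S i j l) {v : V}
    (hv : v ∈ l.dropLast) : ReflTransGen (StepOff ω S) i v := by
  induction h with
  | edge _ =>
    obtain rfl : v = _ := by simpa using hv
    exact .refl
  | cons hik hl ih =>
    obtain ⟨x, m, rfl⟩ := hl.exists_eq_cons_cons
    rcases mem_cons.mp (dropLast_cons_of_ne_nil (cons_ne_nil _ _) ▸ hv) with rfl | hv
    · exact .refl
    · exact .head hik (ih hv)

theorem isBranchList (hω : ∀ i j, ¬ E i j → ω i j = 0)
    (hacyc : ∀ a, ¬ TransGen (StepOff ω S) a a) (hj : j ∈ S) (h : IsSupportBranch ω S i j l) :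
    IsBranchList E S i j l := by
  have hE : ∀ {a b}, ω a b ≠ 0 → E a b := fun hab => by_contra fun h => hab (hω _ _ h)
  induction h with
  | edge hij => exact ⟨by simp, isChain_pair.mpr (hE hij), rfl, rfl, by simp, by simp, by simp⟩
  | @cons i k j l hik hl ih =>
    obtain ⟨x, m, rfl⟩ := hl.exists_eq_cons_cons
    obtain ⟨-, hchain, -, hlast, htail, hdrop, hint⟩ := ih hj
    rw [dropLast_cons_cons] at hdrop
    have hi : i ∉ k :: (x :: m).dropLast := fun hi =>
      hacyc i (.head' hik (hl.reflTransGen_of_mem_dropLast (dropLast_cons_cons ▸ hi)))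
    have hk : k ∉ x :: m := by
      rw [← dropLast_append_getLast (cons_ne_nil x m), mem_append, mem_singleton]
      rintro (hk | hk)
      · exact (nodup_cons.mp hdrop).1 hk
      · rw [getLast?_cons_cons, getLast?_eq_some_getLast (cons_ne_nil x m), ← hk] at hlast
        exact hik.2 (Option.some.inj hlast ▸ hj)
    refine ⟨by simp, hchain.cons_cons (hE hik.1), rfl, by rwa [getLast?_cons_cons], ?_, ?_, ?_⟩
    · exact nodup_cons.mpr ⟨hk, htail⟩
    · rw [dropLast_cons_cons]
      exact nodup_cons.mpr ⟨hi, hdrop⟩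
    · simp only [tail_cons, dropLast_cons_cons, mem_cons] at hint ⊢
      rintro v (rfl | hv)
      · exact hik.2
      · exact hint v hv

end IsSupportBranch

section Branches

variable [Field K] {E : V → V → Prop} {ω : V → V → K} {S : Set V} {lam : K} {i j : V}
  {l : List V}

theorem isChain_of_branchWeight_ne_zero :
    ∀ {l : List V}, branchWeight ω lam l ≠ 0 → IsChain (fun a b => ω a b ≠ 0) l
  | [], h | [_], h => (h rfl).elim
  | [_, _], h => isChain_pair.mpr h
  | a :: b :: c :: t, h => by
    have hab : ω a b ≠ 0 := fun h0 => h (by simp [branchWeight, h0])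
    have hrest : branchWeight ω lam (b :: c :: t) ≠ 0 := fun h0 => h (by simp [branchWeight, h0])
    exact (isChain_of_branchWeight_ne_zero hrest).cons_cons hab

theorem isSupportBranch_of_isChain :
    ∀ {i : V} {l : List V}, IsChain (fun a b => ω a b ≠ 0) l → 2 ≤ l.length →
      l.head? = some i → l.getLast? = some j → (∀ v ∈ l.tail.dropLast, v ∉ S) →
      IsSupportBranch ω S i j l
  | _, [_, _], hl, _, rfl, rfl, _ => .edge (isChain_pair (R := fun a b => ω a b ≠ 0) |>.mp hl)
  | _, i :: k :: x :: m, hl, _, rfl, hlast, hint => by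
    have hk : k ∉ S := hint k (by simp)
    rw [isChain_cons_cons] at hl
    refine .cons ⟨hl.1, hk⟩ (isSupportBranch_of_isChain hl.2 (by simp) rfl ?_ ?_)
    · rwa [getLast?_cons_cons] at hlast
    · intro v hv
      simp only [tail_cons, dropLast_cons_cons] at hv hint
      exact hint v (mem_cons_of_mem _ hv)

theorem IsBranchList.isSupportBranch (h : IsBranchList E S i j l)
    (hw : branchWeight ω lam l ≠ 0) : IsSupportBranch ω S i j l :=
  isSupportBranch_of_isChain (isChain_of_branchWeight_ne_zero hw) h.1 h.2.2.1 h.2.2.2.1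
    h.2.2.2.2.2.2

theorem Rentry_eq_finsum_isSupportBranch (hω : ∀ i j, ¬ E i j → ω i j = 0)
    (hacyc : ∀ a, ¬ TransGen (StepOff ω S) a a) (hj : j ∈ S) :
    Rentry E S ω lam i j = ∑ᶠ l ∈ {l | IsSupportBranch ω S i j l}, branchWeight ω lam l := by
  refine finsum_mem_inter_support_eq _ _ _ (Set.ext fun l => ?_)
  simp only [Set.mem_inter_iff, Set.mem_ofPred_eq, Function.mem_support]
  exact ⟨fun ⟨h, hw⟩ => ⟨h.isSupportBranch hw, hw⟩,
    fun ⟨h, hw⟩ => ⟨h.isBranchList hω hacyc hj, hw⟩⟩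

theorem setOf_isBranchList_finite [Fintype V] (E : V → V → Prop) (S : Set V) (i j : V) :
    {l : List V | IsBranchList E S i j l}.Finite := by
  refine (List.finite_length_le V (Fintype.card V + 1)).subset fun l hl => ?_
  have := hl.2.2.2.2.1.length_le_card
  simp only [length_tail] at this
  exact Nat.le_succ_of_pred_le this

theorem setOf_isSupportBranch_eq :
    {l | IsSupportBranch ω S i j l} = {l | l = [i, j] ∧ ω i j ≠ 0} ∪
      ⋃ k ∈ {k | StepOff ω S i k}, List.cons i '' {l | IsSupportBranch ω S k j l} := by
  ext l
  simp only [Set.mem_ofPred_eq, Set.mem_union, Set.mem_iUnion, Set.mem_image, exists_prop]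
  constructor
  · rintro (hij | ⟨hik, hl⟩)
    · exact .inl ⟨rfl, hij⟩
    · exact .inr ⟨_, hik, _, hl, rfl⟩
  · rintro (⟨rfl, hij⟩ | ⟨k, hik, l, hl, rfl⟩)
    · exact .edge hij
    · exact .cons hik hl

theorem IsSupportBranch.branchWeight_cons {k : V}
    (h : IsSupportBranch ω S k j l) (i : V) :
    branchWeight ω lam (i :: l) = ω i k * branchWeight ω lam l / (lam - ω k k) := by
  obtain ⟨x, m, rfl⟩ := h.exists_eq_cons_cons
  rfl

theorem Rentry_eq_add_finsum [Fintype V] (hω : ∀ i j, ¬ E i j → ω i j = 0)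
    (hacyc : ∀ a, ¬ TransGen (StepOff ω S) a a) (hj : j ∈ S) :
    Rentry E S ω lam i j =
      ω i j + ∑ᶠ k ∈ Sᶜ, ω i k * Rentry E S ω lam k j / (lam - ω k k) := by
  have hfin (k : V) : {l | IsSupportBranch ω S k j l}.Finite :=
    (setOf_isBranchList_finite E S k j).subset fun _ h => h.isBranchList hω hacyc hj
  have hdisj : Disjoint {l | l = [i, j] ∧ ω i j ≠ 0}
      (⋃ k ∈ {k | StepOff ω S i k}, List.cons i '' {l | IsSupportBranch ω S k j l}) := by
    simp only [Set.disjoint_left, Set.mem_iUnion, Set.mem_image, not_exists, not_and]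
    rintro _ ⟨rfl, -⟩ k - l hl heq
    obtain ⟨x, m, rfl⟩ := hl.exists_eq_cons_cons
    simp at heq
  have hpair : {k | StepOff ω S i k}.PairwiseDisjoint
      fun k => List.cons i '' {l | IsSupportBranch ω S k j l} := by
    intro k₁ _ k₂ _ hne
    refine Set.disjoint_left.mpr ?_
    rintro _ ⟨l, hl₁, rfl⟩ ⟨l, hl₂, hl⟩
    obtain ⟨x, m, rfl⟩ := hl₁.exists_eq_cons_cons
    obtain ⟨x', m', rfl⟩ := hl₂.exists_eq_cons_cons
    simp_all
  rw [Rentry_eq_finsum_isSupportBranch hω hacyc hj, setOf_isSupportBranch_eq,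
    finsum_mem_union hdisj ((Set.finite_singleton [i, j]).subset fun _ h => h.1)
      (Set.toFinite _ |>.biUnion fun k _ => (hfin k).image _),
    finsum_mem_biUnion hpair (Set.toFinite _) fun k _ => (hfin k).image _]
  congr 1
  · by_cases hij : ω i j = 0
    · simp [hij]
    · simp [hij, branchWeight]
  · calc _ = ∑ᶠ k ∈ {k | StepOff ω S i k}, ω i k * Rentry E S ω lam k j / (lam - ω k k) := by
          refine finsum_mem_congr rfl fun k _ => ?_
          rw [finsum_mem_image cons_injective.injOn,
            finsum_mem_congr rfl fun l hl => hl.branchWeight_cons i,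
            Rentry_eq_finsum_isSupportBranch hω hacyc hj, mul_div_right_comm, mul_finsum_mem]
          simp only [mul_div_right_comm]
      _ = _ := finsum_mem_inter_support_eq _ _ _ <| Set.ext fun k =>
          ⟨fun ⟨hik, hf⟩ => ⟨hik.2, hf⟩,
            fun ⟨hk, hf⟩ => ⟨⟨fun h0 => hf (by simp [h0]), hk⟩, hf⟩⟩

end Branches

section RowSums

variable {E : V → V → Prop} {S : Set V}

theorem wellFounded_flip_stepOff [Finite V] [Zero K] {ω : V → V → K}
    (hacyc : ∀ a, ¬ TransGen (StepOff ω S) a a) : WellFounded (flip (StepOff ω S)) := by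
  have : IsTrans V (TransGen (flip (StepOff ω S))) := ⟨fun _ _ _ => TransGen.trans⟩
  have : Std.Irrefl (TransGen (flip (StepOff ω S))) := ⟨fun a h => hacyc a (transGen_swap.mp h)⟩
  exact (Finite.wellFounded_of_trans_of_irrefl _).mono fun _ _ => TransGen.single

theorem finsum_Rentry_eq_one [Fintype V] [Field K] {ω : V → V → K}
    (hω : ∀ i j, ¬ E i j → ω i j = 0) (hacyc : ∀ a, ¬ TransGen (StepOff ω S) a a)
    (hrow : ∀ i, ∑ j, ω i j = 1) (hdiag : ∀ i, i ∉ S → ω i i = 0) (i : V) :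
    ∑ᶠ j ∈ S, Rentry E S ω 1 i j = 1 := by
  induction i using (wellFounded_flip_stepOff hacyc).induction with
  | _ i ih =>
  have hrec (j : V) (hj : j ∈ S) :
      Rentry E S ω 1 i j = ω i j + ∑ᶠ k ∈ Sᶜ, ω i k * Rentry E S ω 1 k j := by
    rw [Rentry_eq_add_finsum hω hacyc hj]
    exact congrArg _ <| finsum_mem_congr rfl fun k hk => by rw [hdiag k hk, sub_zero, div_one]
  calc ∑ᶠ j ∈ S, Rentry E S ω 1 i j
      = ∑ᶠ j ∈ S, ω i j + ∑ᶠ k ∈ Sᶜ, ω i k * ∑ᶠ j ∈ S, Rentry E S ω 1 k j := by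
        rw [finsum_mem_congr rfl hrec, finsum_mem_add_distrib (Set.toFinite S),
          finsum_mem_comm _ (Set.toFinite S) (Set.toFinite Sᶜ)]
        simp only [mul_finsum_mem]
    _ = ∑ᶠ j ∈ S, ω i j + ∑ᶠ k ∈ Sᶜ, ω i k := by
        refine congrArg _ <| finsum_mem_congr rfl fun k hk => ?_
        by_cases h0 : ω i k = 0
        · simp [h0]
        · rw [ih k ⟨h0, hk⟩, mul_one]
    _ = 1 := by
        rw [← finsum_mem_union disjoint_compl_right (Set.toFinite S) (Set.toFinite Sᶜ),
          Set.union_compl_self, finsum_mem_univ, finsum_eq_sum_of_fintype, hrow]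

theorem branchWeight_nonneg [Field K] [LinearOrder K] [IsStrictOrderedRing K]
    {ω : V → V → K} {lam : K} (hω : ∀ a b, 0 ≤ ω a b) :
    ∀ {l : List V}, (∀ v ∈ l.tail.dropLast, ω v v ≤ lam) → 0 ≤ branchWeight ω lam l
  | [], _ | [_], _ => le_rfl
  | [a, b], _ => hω a b
  | a :: b :: c :: t, h => by
    simp only [tail_cons, dropLast_cons_cons, mem_cons] at h
    refine div_nonneg (mul_nonneg (hω a b) (branchWeight_nonneg hω fun v hv => ?_))
      (sub_nonneg.mpr (h b (.inl rfl)))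
    exact h v (.inr hv)

theorem Rentry_nonneg [Field K] [LinearOrder K] [IsStrictOrderedRing K] {ω : V → V → K}
    {lam : K} (hω : ∀ a b, 0 ≤ ω a b) (hdiag : ∀ v, v ∉ S → ω v v ≤ lam) (i j : V) :
    0 ≤ Rentry E S ω lam i j :=
  finsum_nonneg fun _ => finsum_nonneg fun hl =>
    branchWeight_nonneg hω fun v hv => hdiag v (hl.2.2.2.2.2.2 v hv)

end RowSums

end ReducedMatrix

/-- If `M_G` is row-stochastic and `S` is a `1`-structural set with zero
diagonal weights off `S`, then the reduced matrix `R_S(G) = R_S(G,1)` is row-stochastic: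
its entries are nonnegative and each of its rows sums to `1`. -/
theorem reduced_matrix_row_stochastic
    {V : Type*} [Fintype V]
    (E : V → V → Prop) (ω : V → V → ℝ)
    (hω : ∀ i j, ¬ E i j → ω i j = 0)
    (hnonneg : ∀ i j, 0 ≤ ω i j)
    (hrow : ∀ i, ∑ j, ω i j = 1)
    (S : Set V) (hstr : IsStructural E ω 1 S)
    (hdiag : ∀ i, i ∉ S → ω i i = 0) :
    (∀ i ∈ S, ∀ j ∈ S, 0 ≤ Rentry E S ω 1 i j) ∧
      ∀ i ∈ S, (∑ᶠ j ∈ S, Rentry E S ω 1 i j) = 1 := by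
  have hacyc := not_transGen_stepOff_self hω hstr.2.1 hdiag
  exact ⟨fun i _ j _ => Rentry_nonneg hnonneg (fun v hv => (hdiag v hv).trans_le zero_le_one) i j,
    fun i _ => finsum_Rentry_eq_one hω hacyc hrow hdiag i⟩
end

section
/- Let m ∈ ℕ, m ≥ 1, and N ∈ ℝ, N ≥ 0. For all real numbers x₀, x₁, …, x_m with 0 ≤ x₀ ≤ x₁ ≤ … ≤ x_m = N, one has Σ_{i=1}^{m} x_{i−1}(x_i − x_{i−1}) ≤ m·N²/(2(m+1)) ≤ N²/2. -/
/-!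
Summation by parts gives `2 Σ xᵢ(xᵢ₊₁ - xᵢ) = x_m² - x₀² - Σ (xᵢ₊₁ - xᵢ)²`. The `m + 1` numbers
`x₀, x₁ - x₀, …, x_m - x_{m-1}` sum to `x_m`, so by Cauchy–Schwarz their squares sum to at least
`x_m² / (m + 1)`, which bounds the left-hand side by `m x_m² / (m + 1)`.
-/

open Finset

def increments {R : Type*} [Sub R] (x : ℕ → R) : ℕ → R
  | 0 => x 0
  | i + 1 => x (i + 1) - x i

section CommRing

variable {R : Type*} [CommRing R] (x : ℕ → R) (m : ℕ)

theorem sum_range_succ_increments : ∑ i ∈ range (m + 1), increments x i = x m := by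
  rw [sum_range_succ', add_comm]
  simp only [increments, sum_range_sub, add_sub_cancel]

theorem sum_range_succ_increments_sq :
    ∑ i ∈ range (m + 1), increments x i ^ 2 = x 0 ^ 2 + ∑ i ∈ range m, (x (i + 1) - x i) ^ 2 := by
  rw [sum_range_succ', add_comm]
  rfl

theorem two_mul_sum_mul_sub_eq :
    2 * ∑ i ∈ range m, x i * (x (i + 1) - x i) =
      x m ^ 2 - x 0 ^ 2 - ∑ i ∈ range m, (x (i + 1) - x i) ^ 2 := by
  induction m with
  | zero => simp
  | succ n ih =>
    rw [sum_range_succ, sum_range_succ, mul_add, ih]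
    ring

end CommRing

theorem sq_le_succ_mul_sq_add_sum_sq_sub {R : Type*} [CommRing R] [LinearOrder R]
    [IsStrictOrderedRing R] (x : ℕ → R) (m : ℕ) :
    x m ^ 2 ≤ (m + 1) * (x 0 ^ 2 + ∑ i ∈ range m, (x (i + 1) - x i) ^ 2) := by
  have h := sq_sum_le_card_mul_sum_sq (s := range (m + 1)) (f := increments x)
  rwa [sum_range_succ_increments, sum_range_succ_increments_sq, card_range, Nat.cast_succ] at h

theorem sum_mul_sub_le {K : Type*} [Field K] [LinearOrder K] [IsStrictOrderedRing K]
    (x : ℕ → K) (m : ℕ) :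
    ∑ i ∈ range m, x i * (x (i + 1) - x i) ≤ m * x m ^ 2 / (2 * (m + 1)) := by
  have hm : (0 : K) < m + 1 := by positivity
  rw [le_div_iff₀ (by positivity)]
  have := two_mul_sum_mul_sub_eq x m
  have := sq_le_succ_mul_sq_add_sum_sq_sub x m
  nlinarith

theorem simplex_sum_bound_general
    (m : ℕ) (N : ℝ)
    (x : ℕ → ℝ) (hxm : x m = N) :
    (∑ i ∈ Finset.range m, x i * (x (i + 1) - x i)) ≤ m * N ^ 2 / (2 * (m + 1)) ∧
      (m : ℝ) * N ^ 2 / (2 * (m + 1)) ≤ N ^ 2 / 2 := by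
  subst hxm
  refine ⟨sum_mul_sub_le x m, ?_⟩
  rw [div_le_div_iff₀ (by positivity) (by norm_num)]
  nlinarith [sq_nonneg (x m)]

/-- Lemma 5 of the paper. For `m ≥ 1`, `N ≥ 0` and reals
`0 ≤ x₀ ≤ x₁ ≤ … ≤ x_m = N`, one has
`Σ_{i=1}^m x_{i-1}(x_i - x_{i-1}) ≤ m N² / (2(m+1)) ≤ N²/2`. -/
theorem simplex_sum_bound
    (m : ℕ) (hm : 1 ≤ m) (N : ℝ) (hN : 0 ≤ N)
    (x : ℕ → ℝ) (hx0 : 0 ≤ x 0) (hmono : ∀ i < m, x i ≤ x (i + 1)) (hxm : x m = N) :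
    (∑ i ∈ Finset.range m, x i * (x (i + 1) - x i)) ≤ m * N ^ 2 / (2 * (m + 1)) ∧
      (m : ℝ) * N ^ 2 / (2 * (m + 1)) ≤ N ^ 2 / 2 :=
  simplex_sum_bound_general m N x hxm
end
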